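/- arXiv:2002.12317 — 2 statements merged into one kernel-verified Lean document; each statement's English description precedes it below -/
import Mathlib

section
/- Let P be an n×n real matrix with operator norm ‖P‖ < 1. Define L(w) = ⟨w, Pw⟩ − Σ_{i=1}^n log(Σ_{j=1}^n exp(w_i w_j)) for w ∈ ℝ^n. Then any global maximizer w of L satisfies ‖w‖² ≤ n·log(n)/(1 − ‖P‖). -/
/-! Comparing the maximizer with `w = 0`: `L 0 = -n log n`, while the diagonal terms `exp (w i ^ 2)`
give `∑ i, log (∑ j, exp (w i * w j)) ≥ ‖w‖²` and the quadratic form is at most `‖P‖ ‖w‖²`.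
Hence `-n log n ≤ L w ≤ (‖P‖ - 1) ‖w‖²`. -/

open scoped BigOperators RealInnerProductSpace

open Finset

section

variable {ι : Type*} [Fintype ι]

theorem sq_le_log_sum_exp_mul (w : ι → ℝ) (i : ι) :
    w i ^ 2 ≤ Real.log (∑ j, Real.exp (w i * w j)) := by
  have hpos : 0 < ∑ j, Real.exp (w i * w j) := sum_pos (fun j _ => Real.exp_pos _) ⟨i, mem_univ i⟩
  rw [Real.le_log_iff_exp_le hpos, sq]
  exact single_le_sum (f := fun j => Real.exp (w i * w j)) (fun j _ => (Real.exp_pos _).le)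
    (mem_univ i)

theorem norm_sq_le_sum_log_sum_exp_mul (w : EuclideanSpace ℝ ι) :
    ‖w‖ ^ 2 ≤ ∑ i, Real.log (∑ j, Real.exp (w i * w j)) := by
  rw [EuclideanSpace.norm_sq_eq]
  exact sum_le_sum fun i _ => by simpa using sq_le_log_sum_exp_mul w i

variable [DecidableEq ι]

theorem Matrix.sum_mul_sum_mul_le_norm_toEuclideanCLM_mul_sq (P : Matrix ι ι ℝ)
    (w : EuclideanSpace ℝ ι) :
    ∑ i, w i * ∑ j, P i j * w j ≤ ‖Matrix.toEuclideanCLM (𝕜 := ℝ) P‖ * ‖w‖ ^ 2 := by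
  set M := Matrix.toEuclideanCLM (𝕜 := ℝ) P
  have hquad : ∑ i, w i * ∑ j, P i j * w j = ⟪w, M w⟫ := by
    simp only [PiLp.inner_apply, RCLike.inner_apply, starRingEnd_apply, star_trivial]
    exact sum_congr rfl fun i _ => mul_comm _ _
  calc ∑ i, w i * ∑ j, P i j * w j = ⟪w, M w⟫ := hquad
    _ ≤ ‖w‖ * ‖M w‖ := real_inner_le_norm w (M w)
    _ ≤ ‖w‖ * (‖M‖ * ‖w‖) := by gcongr; exact M.le_opNorm w
    _ = ‖M‖ * ‖w‖ ^ 2 := by ring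

end

theorem stmt_0_general (n : ℕ) (P : Matrix (Fin n) (Fin n) ℝ)
    (hP : ‖Matrix.toEuclideanCLM (𝕜 := ℝ) P‖ < 1)
    (L : EuclideanSpace ℝ (Fin n) → ℝ)
    (hL : ∀ w : EuclideanSpace ℝ (Fin n),
      L w = (∑ i, w i * ∑ j, P i j * w j)
        - ∑ i, Real.log (∑ j, Real.exp (w i * w j)))
    (w : EuclideanSpace ℝ (Fin n)) (hw : ∀ v, L v ≤ L w) :
    ‖w‖ ^ 2 ≤ n * Real.log n / (1 - ‖Matrix.toEuclideanCLM (𝕜 := ℝ) P‖) := by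
  have hL0 : L 0 = -(n * Real.log n) := by simp [hL 0]
  have hquad := Matrix.sum_mul_sum_mul_le_norm_toEuclideanCLM_mul_sq P w
  have hlog := norm_sq_le_sum_log_sum_exp_mul w
  have hcompare := hw 0
  rw [hL0, hL w] at hcompare
  rw [le_div_iff₀ (by linarith)]
  linarith

theorem stmt_0 (n : ℕ) (hn : 2 ≤ n) (P : Matrix (Fin n) (Fin n) ℝ)
    (hP : ‖Matrix.toEuclideanCLM (𝕜 := ℝ) P‖ < 1)
    (L : EuclideanSpace ℝ (Fin n) → ℝ)
    (hL : ∀ w : EuclideanSpace ℝ (Fin n),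
      L w = (∑ i, w i * ∑ j, P i j * w j)
        - ∑ i, Real.log (∑ j, Real.exp (w i * w j)))
    (w : EuclideanSpace ℝ (Fin n)) (hw : ∀ v, L v ≤ L w) :
    ‖w‖ ^ 2 ≤ n * Real.log n / (1 - ‖Matrix.toEuclideanCLM (𝕜 := ℝ) P‖) :=
  stmt_0_general n P hP L hL w hw
end

section
/- Let w, v ∈ ℝ^n satisfy ‖w‖_∞ ≤ C n^{−1/2} and ‖v‖_∞ ≤ C n^{−1/2}. Define L(w,v) = ⟨w, Pv⟩ − Σ_{i=1}^n log(Σ_{j=1}^n exp(w_i v_j)). Then |L(w,v) − ⟨w, Pv⟩ + (1/n)(Σ_i w_i)(Σ_j v_j) + (1/(2n))Σ_{i,j} w_i² v_j² + n log n| ≤ C'·n^{−1}, where C' depends only on C. -/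
/-! In row `i` put `x j = w i * v j`, so `|x j| ≤ a := C ^ 2 / n`. Jensen's inequality for `exp`
gives `log ∑ j, exp (x j) ≥ log n + 𝔼 x`, and `exp y ≤ 1 + y + y ^ 2` for `|y| ≤ 1` together with
`1 + t ≤ exp t` gives `log ∑ j, exp (x j) ≤ log n + 𝔼 x + a ^ 2`. The quadratic term
`(∑ j, x j ^ 2) / (2 n)` is itself at most `a ^ 2 / 2`, so each of the `n` rows contributes
`O(a ^ 2) = O(n⁻²)`. -/

open Finset Real

section LogSumExp

variable {ι : Type*} [Fintype ι] [Nonempty ι]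

lemma log_card_add_mean_le_log_sum_exp (x : ι → ℝ) :
    log (Fintype.card ι) + (∑ j, x j) / Fintype.card ι ≤ log (∑ j, exp (x j)) := by
  have hN : (0 : ℝ) < Fintype.card ι := mod_cast Fintype.card_pos
  have jensen := convexOn_exp.map_sum_le (t := univ) (w := fun _ => (Fintype.card ι : ℝ)⁻¹)
    (p := x) (fun _ _ => by positivity) (by simp [hN.ne']) (fun _ _ => Set.mem_univ _)
  simp only [smul_eq_mul, ← mul_sum] at jensen
  rw [le_log_iff_exp_le (by positivity), exp_add, exp_log hN, div_eq_inv_mul]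
  calc (Fintype.card ι : ℝ) * exp ((Fintype.card ι : ℝ)⁻¹ * ∑ j, x j)
      ≤ Fintype.card ι * ((Fintype.card ι : ℝ)⁻¹ * ∑ j, exp (x j)) := by gcongr
    _ = ∑ j, exp (x j) := by field_simp

lemma log_sum_exp_le_log_card_add {x : ι → ℝ} {a : ℝ} (hx : ∀ j, x j ≤ a) :
    log (∑ j, exp (x j)) ≤ log (Fintype.card ι) + a := by
  rw [log_le_iff_le_exp (by positivity), exp_add, exp_log (mod_cast Fintype.card_pos)]
  simpa using sum_le_card_nsmul univ _ _ fun j _ => exp_le_exp.2 (hx j)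

lemma log_sum_exp_le_log_card_add_mean_add_sq {x : ι → ℝ} {a : ℝ}
    (hx : ∀ j, |x j| ≤ a) (ha : a ≤ 1) :
    log (∑ j, exp (x j)) ≤ log (Fintype.card ι) + ((∑ j, x j) / Fintype.card ι + a ^ 2) := by
  have hN : (0 : ℝ) < Fintype.card ι := mod_cast Fintype.card_pos
  have hexp : ∀ j, exp (x j) ≤ 1 + x j + a ^ 2 := fun j => by
    have h := (abs_le.1 (abs_exp_sub_one_sub_id_le ((hx j).trans ha))).2
    nlinarith [sq_le_sq' (abs_le.1 (hx j)).1 (abs_le.1 (hx j)).2]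
  rw [log_le_iff_le_exp (by positivity), exp_add, exp_log hN]
  calc ∑ j, exp (x j) ≤ ∑ j, (1 + x j + a ^ 2) := sum_le_sum fun j _ => hexp j
    _ = Fintype.card ι * ((∑ j, x j) / Fintype.card ι + a ^ 2 + 1) := by
      simp only [sum_add_distrib, sum_const, card_univ, nsmul_eq_mul]
      field_simp
      ring
    _ ≤ Fintype.card ι * exp ((∑ j, x j) / Fintype.card ι + a ^ 2) := by
      gcongr
      exact add_one_le_exp _

lemma abs_log_sum_exp_sub_log_card_add_mean_le {x : ι → ℝ} {a : ℝ} (hx : ∀ j, |x j| ≤ a) :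
    |log (∑ j, exp (x j)) - (log (Fintype.card ι) + (∑ j, x j) / Fintype.card ι)| ≤ 2 * a ^ 2 := by
  rw [abs_sub_le_iff]
  refine ⟨?_, by linarith [log_card_add_mean_le_log_sum_exp x, sq_nonneg a]⟩
  rcases le_or_gt a 1 with ha | ha
  · linarith [log_sum_exp_le_log_card_add_mean_add_sq hx ha, sq_nonneg a]
  · have hmean : -a ≤ (∑ j, x j) / Fintype.card ι := Fintype.expect_eq_sum_div_card x ▸
      le_expect univ_nonempty fun j _ => (abs_le.1 (hx j)).1
    have hlog := log_sum_exp_le_log_card_add fun j => (abs_le.1 (hx j)).2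
    nlinarith

lemma abs_log_card_add_moments_sub_log_sum_exp_le {x : ι → ℝ} {a : ℝ} (hx : ∀ j, |x j| ≤ a) :
    |log (Fintype.card ι) + (∑ j, x j) / Fintype.card ι
        + (∑ j, x j ^ 2) / (2 * Fintype.card ι) - log (∑ j, exp (x j))|
      ≤ 5 / 2 * a ^ 2 := by
  have hsq : 0 ≤ (∑ j, x j ^ 2) / (2 * Fintype.card ι) := by positivity
  have hsq' : (∑ j, x j ^ 2) / (2 * Fintype.card ι) ≤ a ^ 2 / 2 := by
    rw [div_le_iff₀ (by positivity)]
    have := sum_le_card_nsmul univ _ (a ^ 2) fun j _ => sq_le_sq.2 ((hx j).trans (le_abs_self a))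
    simp only [card_univ, nsmul_eq_mul] at this
    linarith
  have := abs_log_sum_exp_sub_log_card_add_mean_le hx
  rw [abs_le] at this ⊢
  constructor <;> linarith

end LogSumExp

theorem stmt_14 (C : ℝ) (hC : 0 < C) :
    ∃ C' : ℝ, 0 < C' ∧ ∀ n : ℕ, 2 ≤ n → ∀ P : Matrix (Fin n) (Fin n) ℝ,
      ∀ w v : Fin n → ℝ,
      (∀ i, |w i| ≤ C / Real.sqrt n) → (∀ i, |v i| ≤ C / Real.sqrt n) →
      |((∑ i, w i * ∑ j, P i j * v j)
          - ∑ i, Real.log (∑ j, Real.exp (w i * v j)))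
        - (∑ i, w i * ∑ j, P i j * v j)
        + (1 / n) * (∑ i, w i) * (∑ j, v j)
        + (1 / (2 * n)) * ∑ i, ∑ j, (w i) ^ 2 * (v j) ^ 2
        + n * Real.log n| ≤ C' / n := by
  refine ⟨5 / 2 * C ^ 4, by positivity, fun n hn P w v hw hv => ?_⟩
  have : Nonempty (Fin n) := ⟨⟨0, by omega⟩⟩
  have hn0 : (0 : ℝ) < n := by positivity
  have hwv : ∀ i j, |w i * v j| ≤ C ^ 2 / n := fun i j =>
    calc |w i * v j| ≤ C / √n * (C / √n) :=
          (abs_mul _ _).trans_le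
            (mul_le_mul (hw i) (hv j) (abs_nonneg _) ((abs_nonneg _).trans (hw i)))
      _ = C ^ 2 / n := by rw [div_mul_div_comm, mul_self_sqrt hn0.le, sq]
  have hrow : ∀ i, |log n + (∑ j, w i * v j) / n + (∑ j, (w i * v j) ^ 2) / (2 * n)
      - log (∑ j, exp (w i * v j))| ≤ 5 / 2 * (C ^ 2 / n) ^ 2 := fun i => by
    simpa using abs_log_card_add_moments_sub_log_sum_exp_le (hwv i)
  calc _ = |∑ i, (log n + (∑ j, w i * v j) / n + (∑ j, (w i * v j) ^ 2) / (2 * n)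
        - log (∑ j, exp (w i * v j)))| := by
        congr 1
        rw [mul_assoc (1 / (n : ℝ)), sum_mul_sum]
        simp only [sum_sub_distrib, sum_add_distrib, ← sum_div, mul_pow, sum_const,
          card_univ, Fintype.card_fin, nsmul_eq_mul]
        ring
    _ ≤ n * (5 / 2 * (C ^ 2 / n) ^ 2) := by
        simpa using (abs_sum_le_sum_abs _ _).trans (sum_le_card_nsmul univ _ _ fun i _ => hrow i)
    _ = 5 / 2 * C ^ 4 / n := by field_simp
end
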